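/- Let M = [[iv, conj(b)],[b, iv]] with v > 0 solve the Dyson equation for η > 0, ζ ∈ ℂ and ρ ∈ (-1,1). Then (Re ζ)²/(1 + η/v + ρ)² + (Im ζ)²/(1 + η/v - ρ)² = |b|² = 1/(1 + η/v) - v². -/

import Mathlib

/-!
For `M = !![i v, conj b; b, i v]` one has `det M = -(v² + |b|²)`, so `-M⁻¹` is explicit. The diagonal
entry of the Dyson equation gives `(v² + |b|²)⁻¹ = 1 + η/v`, the off-diagonal one
`ζ = -(1 + η/v) conj b - ρ b`; taking real and imaginary parts, `(Re ζ, Im ζ)` is `(Re b, Im b)`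
scaled by `-(1 + η/v + ρ)` and `1 + η/v - ρ`, which are positive since `η/v > 0` and `|ρ| < 1`.
-/

open Matrix

/-- The self-energy operator of the elliptic ensemble. -/
noncomputable def selfEnergy (ρ : ℝ) (A : Matrix (Fin 2) (Fin 2) ℂ) : Matrix (Fin 2) (Fin 2) ℂ :=
  !![A 1 1, (ρ : ℂ) * A 1 0; (ρ : ℂ) * A 0 1, A 0 0]

open Complex ComplexConjugate

section

variable (v : ℝ) (b : ℂ)

theorem det_dysonAnsatz :
    (!![I * v, conj b; b, I * v]).det = -((v ^ 2 + normSq b : ℝ) : ℂ) := by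
  rw [det_fin_two_of, mul_comm (conj b), mul_conj]
  push_cast
  ring_nf
  rw [I_sq]
  ring

theorem neg_inv_dysonAnsatz :
    -(!![I * v, conj b; b, I * v])⁻¹ =
      ((v ^ 2 + normSq b : ℝ) : ℂ)⁻¹ • !![I * v, -conj b; -b, I * v] := by
  rw [Matrix.inv_def, det_dysonAnsatz, adjugate_fin_two_of, Ring.inverse_eq_inv', inv_neg,
    neg_smul, neg_neg]

end

theorem re_im_of_eq_neg_mul_conj_sub_mul {ζ b : ℂ} {t ρ : ℝ}
    (hζ : ζ = -t * conj b - ρ * b) : ζ.re = -(t + ρ) * b.re ∧ ζ.im = (t - ρ) * b.im := by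
  subst hζ
  simp only [sub_re, sub_im, mul_re, mul_im, neg_re, neg_im, ofReal_re, ofReal_im, conj_re,
    conj_im]
  constructor <;> ring

theorem ellipse_of_eq_neg_mul_conj_sub_mul {ζ b : ℂ} {t ρ : ℝ} (h₁ : t + ρ ≠ 0) (h₂ : t - ρ ≠ 0)
    (hζ : ζ = -t * conj b - ρ * b) :
    ζ.re ^ 2 / (t + ρ) ^ 2 + ζ.im ^ 2 / (t - ρ) ^ 2 = ‖b‖ ^ 2 := by
  obtain ⟨hre, him⟩ := re_im_of_eq_neg_mul_conj_sub_mul hζ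
  rw [hre, him, ← normSq_eq_norm_sq, normSq_apply]
  field_simp

theorem dysonAnsatz_solution {ρ η v : ℝ} {ζ b : ℂ} (hv : v ≠ 0)
    (hdyson : -(!![I * v, conj b; b, I * v])⁻¹ =
      !![I * η, ζ; conj ζ, I * η] + selfEnergy ρ !![I * v, conj b; b, I * v]) :
    (v ^ 2 + normSq b)⁻¹ = 1 + η / v ∧ ζ = -(1 + η / v : ℝ) * conj b - ρ * b := by
  rw [neg_inv_dysonAnsatz] at hdyson
  have h₀₀ := congrFun₂ hdyson 0 0
  have h₀₁ := congrFun₂ hdyson 0 1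
  simp only [selfEnergy, Matrix.smul_apply, Matrix.add_apply, Matrix.of_apply, Matrix.cons_val',
    Matrix.cons_val_zero, Matrix.cons_val_one, Matrix.empty_val', Matrix.cons_val_fin_one,
    smul_eq_mul] at h₀₀ h₀₁
  rw [← ofReal_inv] at h₀₀ h₀₁
  generalize (v ^ 2 + normSq b)⁻¹ = s at h₀₀ h₀₁ ⊢
  have hs : s = 1 + η / v := by
    apply ofReal_injective
    have hv' : (v : ℂ) ≠ 0 := ofReal_ne_zero.mpr hv
    push_cast
    field_simp
    linear_combination (-I) * h₀₀ + (s * v - v - η) * I_sq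
  refine ⟨hs, ?_⟩
  rw [← hs]
  linear_combination -h₀₁

theorem stmt4_general (ρ η v : ℝ) (hρ₁ : -1 < ρ) (hρ₂ : ρ < 1) (hη : 0 < η) (hv : 0 < v)
    (ζ b : ℂ) (M : Matrix (Fin 2) (Fin 2) ℂ)
    (hform : M = !![Complex.I * v, (starRingEnd ℂ) b; b, Complex.I * v])
    (hdyson : -M⁻¹ = !![Complex.I * η, ζ; (starRingEnd ℂ) ζ, Complex.I * η] + selfEnergy ρ M) :
    ζ.re ^ 2 / (1 + η / v + ρ) ^ 2 + ζ.im ^ 2 / (1 + η / v - ρ) ^ 2 = ‖b‖ ^ 2 ∧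
      ‖b‖ ^ 2 = 1 / (1 + η / v) - v ^ 2 := by
  subst hform
  obtain ⟨hs, hζ⟩ := dysonAnsatz_solution hv.ne' hdyson
  have hηv : 0 < η / v := div_pos hη hv
  refine ⟨ellipse_of_eq_neg_mul_conj_sub_mul (by linarith) (by linarith) hζ, ?_⟩
  rw [← hs, one_div, inv_inv, ← normSq_eq_norm_sq]
  ring

theorem stmt4 (ρ η v : ℝ) (hρ₁ : -1 < ρ) (hρ₂ : ρ < 1) (hη : 0 < η) (hv : 0 < v)
    (ζ b : ℂ) (M : Matrix (Fin 2) (Fin 2) ℂ)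
    (hform : M = !![Complex.I * v, (starRingEnd ℂ) b; b, Complex.I * v])
    (hunit : IsUnit M.det)
    (hdyson : -M⁻¹ = !![Complex.I * η, ζ; (starRingEnd ℂ) ζ, Complex.I * η] + selfEnergy ρ M) :
    ζ.re ^ 2 / (1 + η / v + ρ) ^ 2 + ζ.im ^ 2 / (1 + η / v - ρ) ^ 2 = ‖b‖ ^ 2 ∧
      ‖b‖ ^ 2 = 1 / (1 + η / v) - v ^ 2 :=
  stmt4_general ρ η v hρ₁ hρ₂ hη hv ζ b M hform hdyson
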